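/- arXiv:2206.14775 — 6 statements merged into one kernel-verified Lean document; each statement's English description precedes it below -/
import Mathlib

section
/- Let R be a CI-ring with identity and e an idempotent element of R (e² = e). Then the corner ring eRe is a CI-ring. -/
open Pointwise

/-- The product of two two-sided ideals: the two-sided ideal generated by pointwise products. -/
def tmul {R : Type*} [Ring R] (A B : TwoSidedIdeal R) : TwoSidedIdeal R :=
  TwoSidedIdeal.span ((A : Set R) * (B : Set R))

/-- A CI-ring is a ring in which any two two-sided ideals commute. -/
def IsCIRing (R : Type*) [Ring R] : Prop :=
  ∀ A B : TwoSidedIdeal R, tmul A B = tmul B A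
/-- The corner set eRe = {x | e*x = x ∧ x*e = x}, as a non-unital subring. -/
def corner {R : Type*} [Ring R] (e : R) : NonUnitalSubring R where
  carrier := {x | e * x = x ∧ x * e = x}
  add_mem' := by
    rintro a b ⟨ha1, ha2⟩ ⟨hb1, hb2⟩
    exact ⟨by rw [mul_add, ha1, hb1], by rw [add_mul, ha2, hb2]⟩
  zero_mem' := ⟨mul_zero e, zero_mul e⟩
  neg_mem' := by
    rintro a ⟨ha1, ha2⟩
    exact ⟨by rw [mul_neg, ha1], by rw [neg_mul, ha2]⟩
  mul_mem' := by
    rintro a b ⟨ha1, ha2⟩ ⟨hb1, hb2⟩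
    exact ⟨by rw [← mul_assoc, ha1], by rw [mul_assoc, hb2]⟩

/-- For an idempotent e, the corner ring eRe is a ring with identity e. -/
def cornerRing {R : Type*} [Ring R] (e : R) (he : e * e = e) : Ring (corner e) :=
  { (inferInstance : NonUnitalRing (corner e)) with
    one := ⟨e, he, he⟩
    one_mul := fun x => Subtype.ext x.2.1
    mul_one := fun x => Subtype.ext x.2.2 }

/-!
Extend an ideal `I` of `eRe` to the ideal `RIR` of `R` (`map ι`), and contract ideals of `R`
back to `eRe` (`comap ι`). Contracting the extension gives back `I`: the compression `x ↦ exe`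
sends `r m s` with `m ∈ I` to `(ere) m (ese) ∈ I`. Extension is multiplicative,
`(RAR)(RBR) = R(AB)R`, because `a t b = a (ete) b` for `a ∈ A`, `b ∈ B`. Hence `AB` is the
contraction of `(RAR)(RBR) = (RBR)(RAR)`, which is `BA`.
-/

namespace TwoSidedIdeal

variable {R S F : Type*} [NonUnitalNonAssocRing R] [NonUnitalNonAssocRing S] [FunLike F R S]
  [NonUnitalRingHomClass F R S] (f : F)

theorem map_le_iff_le_comap {I : TwoSidedIdeal R} {J : TwoSidedIdeal S} :
    map f I ≤ J ↔ I ≤ comap f J := by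
  rw [map, span_le, Set.image_subset_iff]
  simp only [SetLike.le_def, Set.subset_def, mem_comap, Set.mem_preimage, SetLike.mem_coe]

theorem le_comap_map (I : TwoSidedIdeal R) : I ≤ comap f (map f I) :=
  (map_le_iff_le_comap f).mp le_rfl

theorem map_span_mul_le (A B : TwoSidedIdeal R) :
    map f (span ((A : Set R) * (B : Set R))) ≤ span ((map f A : Set S) * (map f B : Set S)) := by
  rw [map_le_iff_le_comap, span_le]
  rintro _ ⟨a, ha, b, hb, rfl⟩
  rw [SetLike.mem_coe, mem_comap, map_mul]
  exact subset_span (Set.mul_mem_mul (subset_span ⟨a, ha, rfl⟩) (subset_span ⟨b, hb, rfl⟩))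

end TwoSidedIdeal

namespace corner

open TwoSidedIdeal

variable {R : Type*} [Ring R] {e : R}

local notation "ι" => NonUnitalSubringClass.subtype (corner e)

def compress (he : e * e = e) : R →+ corner e :=
  AddMonoidHom.mk'
    (fun x => ⟨e * x * e, by rw [← mul_assoc, ← mul_assoc, he], by rw [mul_assoc, he]⟩)
    fun x y => Subtype.ext (by simp only [AddMemClass.coe_add, mul_add, add_mul])

@[simp]
theorem coe_compress (he : e * e = e) (x : R) : (compress he x : R) = e * x * e := rfl

theorem compress_coe (he : e * e = e) (x : corner e) : compress he x = x :=
  Subtype.ext (by rw [coe_compress, x.2.1, x.2.2])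

theorem compress_mul_mul (he : e * e = e) (x y : R) (m : corner e) :
    compress he (x * m * y) = compress he x * m * compress he y := by
  ext
  have hl : e * (m : R) = m := m.2.1
  have hr : (m : R) * e = m := m.2.2
  conv_lhs => rw [coe_compress, ← hr, ← hl]
  simp only [MulMemClass.coe_mul, coe_compress, mul_assoc]

theorem comap_map_le (he : e * e = e) (I : TwoSidedIdeal (corner e)) :
    comap ι (map ι I) ≤ I := by
  intro x hx
  rw [mem_comap] at hx
  have key : ∀ y ∈ map ι I, ∀ r s : R, compress he (r * y * s) ∈ I := by
    intro y hy
    induction hy using span_induction with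
    | mem y hy =>
      obtain ⟨m, hm, rfl⟩ := hy
      intro r s
      rw [NonUnitalSubringClass.subtype_apply, compress_mul_mul]
      exact I.mul_mem_right _ _ (I.mul_mem_left _ _ hm)
    | zero => simp
    | add y z _ _ hy hz => intro r s; simpa [mul_add, add_mul] using I.add_mem (hy r s) (hz r s)
    | neg y _ hy => intro r s; simpa using I.neg_mem (hy r s)
    | left_absorb a y _ hy => intro r s; simpa [mul_assoc] using hy (r * a) s
    | right_absorb b y _ hy => intro r s; simpa [mul_assoc] using hy r (b * s)
  simpa [compress_coe] using key _ hx 1 1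

theorem coe_mul_compress_mul (he : e * e = e) (a b : corner e) (t : R) :
    ((a * compress he t * b : corner e) : R) = a * t * b := by
  conv_rhs => rw [← a.2.2, ← b.2.1]
  simp only [MulMemClass.coe_mul, coe_compress, mul_assoc]

theorem mul_mul_mem_map_span_mul (he : e * e = e) {A B : TwoSidedIdeal (corner e)}
    {a : corner e} (ha : a ∈ A) {v : R} (hv : v ∈ map ι B) (t : R) :
    (a : R) * t * v ∈ map ι (span (↑A * ↑B : Set (corner e))) := by
  induction hv using span_induction generalizing t with
  | mem v hv =>
    obtain ⟨b, hb, rfl⟩ := hv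
    rw [NonUnitalSubringClass.subtype_apply, ← coe_mul_compress_mul he]
    exact subset_span ⟨_, subset_span (Set.mul_mem_mul (A.mul_mem_right _ _ ha) hb), rfl⟩
  | zero => simp
  | add y z _ _ hy hz => simpa [mul_add] using add_mem (hy t) (hz t)
  | neg y _ hy => simpa using neg_mem (hy t)
  | left_absorb c y _ hy => simpa [mul_assoc] using hy (t * c)
  | right_absorb c y _ hy => simpa [mul_assoc] using mul_mem_right _ _ c (hy t)

theorem mul_mem_map_span_mul (he : e * e = e) {A B : TwoSidedIdeal (corner e)} {u v : R}
    (hu : u ∈ map ι A) (hv : v ∈ map ι B) :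
    u * v ∈ map ι (span (↑A * ↑B : Set (corner e))) := by
  induction hu using span_induction generalizing v with
  | mem u hu =>
    obtain ⟨a, ha, rfl⟩ := hu
    simpa using mul_mul_mem_map_span_mul he ha hv 1
  | zero => simp
  | add x y _ _ hx hy => simpa [add_mul] using add_mem (hx hv) (hy hv)
  | neg x _ hx => simpa using neg_mem (hx hv)
  | left_absorb c x _ hx => simpa [mul_assoc] using mul_mem_left _ c _ (hx hv)
  | right_absorb c x _ hx => simpa [mul_assoc] using hx (mul_mem_left _ c _ hv)

theorem map_span_mul (he : e * e = e) (A B : TwoSidedIdeal (corner e)) :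
    map ι (span (↑A * ↑B : Set (corner e))) = tmul (map ι A) (map ι B) := by
  refine le_antisymm (map_span_mul_le _ A B) (span_le.mpr ?_)
  rintro _ ⟨u, hu, v, hv, rfl⟩
  exact mul_mem_map_span_mul he hu hv

end corner

open TwoSidedIdeal corner in
/-- If R is a CI-ring and e an idempotent, then the corner ring eRe is a CI-ring. -/
theorem ci_corner {R : Type*} [Ring R] (hR : IsCIRing R) (e : R) (he : e * e = e) :
    @IsCIRing (corner e) (cornerRing e he) := by
  let ι := NonUnitalSubringClass.subtype (corner e)
  have swap (A B : TwoSidedIdeal (corner e)) :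
      span (↑A * ↑B : Set (corner e)) ≤ span (↑B * ↑A : Set (corner e)) :=
    calc span (↑A * ↑B : Set (corner e))
        ≤ comap ι (map ι (span (↑A * ↑B : Set (corner e)))) := le_comap_map ι _
      _ = comap ι (tmul (map ι A) (map ι B)) := by rw [map_span_mul he]
      _ = comap ι (tmul (map ι B) (map ι A)) := by rw [hR]
      _ = comap ι (map ι (span (↑B * ↑A : Set (corner e)))) := by
        rw [map_span_mul he]
      _ ≤ span (↑B * ↑A : Set (corner e)) := comap_map_le he _
  exact fun A B => le_antisymm (swap A B) (swap B A)
end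

section
/- Let R be a CI-ring with identity and A₁, …, Aₙ two-sided ideals of R that are pairwise comaximal (Aᵢ + Aⱼ = R for i ≠ j). Then the intersection ⋂ᵢ Aᵢ equals the product A₁A₂⋯Aₙ. -/
open Pointwise

/-- The ordered product of a list of two-sided ideals. -/
def tmulList {R : Type*} [Ring R] (l : List (TwoSidedIdeal R)) : TwoSidedIdeal R :=
  l.foldr tmul ⊤

section aux

variable {R : Type*} [Ring R]

lemma tspan_le {s : Set R} {I : TwoSidedIdeal R} (h : s ⊆ I) : TwoSidedIdeal.span s ≤ I :=
  fun _ hx => TwoSidedIdeal.mem_span_iff.mp hx I h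

lemma mul_mem_tmul {A B : TwoSidedIdeal R} {a b : R} (ha : a ∈ A) (hb : b ∈ B) :
    a * b ∈ tmul A B :=
  TwoSidedIdeal.subset_span (Set.mul_mem_mul ha hb)

lemma tmul_le_left {A B : TwoSidedIdeal R} : tmul A B ≤ A := by
  refine tspan_le ?_
  rintro _ ⟨a, ha, b, hb, rfl⟩
  exact A.mul_mem_right a b ha

lemma tmul_le_right {A B : TwoSidedIdeal R} : tmul A B ≤ B := by
  refine tspan_le ?_
  rintro _ ⟨a, ha, b, hb, rfl⟩
  exact B.mul_mem_left a b hb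

lemma eq_top_of_one_mem' {I : TwoSidedIdeal R} (h : (1 : R) ∈ I) : I = ⊤ :=
  eq_top_iff.2 fun x _ => by simpa using I.mul_mem_left x 1 h

lemma inf_eq_tmul_of_sup_eq_top (hR : IsCIRing R) {A B : TwoSidedIdeal R}
    (h : A ⊔ B = ⊤) : A ⊓ B = tmul A B := by
  refine le_antisymm ?_ (le_inf tmul_le_left tmul_le_right)
  intro x hx
  obtain ⟨hxA, hxB⟩ : x ∈ A ∧ x ∈ B := hx
  have h1 : (1 : R) ∈ A ⊔ B := by rw [h]; trivial
  obtain ⟨a, ha, b, hb, hab⟩ := TwoSidedIdeal.mem_sup.1 h1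
  have hx' : x = x * a + x * b := by rw [← mul_add, hab, mul_one]
  rw [hx']
  refine (tmul A B).add_mem ?_ ?_
  · rw [hR A B]; exact mul_mem_tmul hxB ha
  · exact mul_mem_tmul hxA hb

lemma sup_inf_eq_top {A B C : TwoSidedIdeal R} (h1 : A ⊔ B = ⊤) (h2 : A ⊔ C = ⊤) :
    A ⊔ (B ⊓ C) = ⊤ := by
  have m1 : (1 : R) ∈ A ⊔ B := by rw [h1]; trivial
  have m2 : (1 : R) ∈ A ⊔ C := by rw [h2]; trivial
  obtain ⟨a, ha, b, hb, hab⟩ := TwoSidedIdeal.mem_sup.1 m1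
  obtain ⟨a', ha', c, hc, hac⟩ := TwoSidedIdeal.mem_sup.1 m2
  refine eq_top_of_one_mem' ?_
  have key : (1 : R) = (a * a' + a * c + b * a') + b * c := by
    have : (1 : R) = (a + b) * (a' + c) := by rw [hab, hac, one_mul]
    rw [this]; noncomm_ring
  rw [key]
  refine (A ⊔ (B ⊓ C)).add_mem (TwoSidedIdeal.mem_sup_left ?_) (TwoSidedIdeal.mem_sup_right ?_)
  · exact A.add_mem (A.add_mem (A.mul_mem_right _ _ ha) (A.mul_mem_right _ _ ha)) (A.mul_mem_left _ _ ha')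
  · exact ⟨B.mul_mem_right _ _ hb, C.mul_mem_left _ _ hc⟩

lemma sup_iInf_eq_top {n : ℕ} {A : TwoSidedIdeal R} {B : Fin n → TwoSidedIdeal R}
    (h : ∀ i, A ⊔ B i = ⊤) : A ⊔ (⨅ i, B i) = ⊤ := by
  induction n with
  | zero => simp
  | succ n ih =>
      have : (⨅ i, B i) = B 0 ⊓ ⨅ i : Fin n, B i.succ := by
        refine le_antisymm (le_inf (iInf_le _ _) (le_iInf fun i => iInf_le _ _)) ?_
        refine le_iInf fun i => ?_
        rcases Fin.eq_zero_or_eq_succ i with rfl | ⟨j, rfl⟩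
        · exact inf_le_left
        · exact inf_le_right.trans (iInf_le _ j)
      rw [this]
      exact sup_inf_eq_top (h 0) (ih fun i => h i.succ)

end aux

/-- In a CI-ring, the intersection of pairwise comaximal ideals equals their product. -/
theorem iInf_eq_tmulList_of_pairwise_comaximal {R : Type*} [Ring R] (hR : IsCIRing R)
    {n : ℕ} (A : Fin n → TwoSidedIdeal R) (hco : ∀ i j, i ≠ j → A i ⊔ A j = ⊤) :
    (⨅ i, A i) = tmulList (List.ofFn A) := by
  induction n with
  | zero => simp [tmulList]
  | succ n ih =>
      have hsplit : (⨅ i, A i) = A 0 ⊓ ⨅ i : Fin n, A i.succ := by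
        refine le_antisymm (le_inf (iInf_le _ _) (le_iInf fun i => iInf_le _ _)) ?_
        refine le_iInf fun i => ?_
        rcases Fin.eq_zero_or_eq_succ i with rfl | ⟨j, rfl⟩
        · exact inf_le_left
        · exact inf_le_right.trans (iInf_le _ j)
      have htail : (⨅ i : Fin n, A i.succ) = tmulList (List.ofFn fun i : Fin n => A i.succ) :=
        ih (fun i : Fin n => A i.succ)
          (fun i j hij => hco i.succ j.succ (fun h => hij (Fin.succ_injective _ h)))
      have hcomax : A 0 ⊔ (⨅ i : Fin n, A i.succ) = ⊤ :=
        sup_iInf_eq_top fun i => hco 0 i.succ (Fin.succ_ne_zero i).symm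
      rw [hsplit, inf_eq_tmul_of_sup_eq_top hR hcomax, htail, List.ofFn_succ]
      rfl
end

section
/- Let R be a CI-ring with identity and A₁, …, Aₙ pairwise comaximal two-sided ideals. Then the canonical ring homomorphism R/(A₁A₂⋯Aₙ) → (R/A₁) × ⋯ × (R/Aₙ) is an isomorphism. -/
open Pointwise

/-!
If `a + b = 1` with `a ∈ A`, `b ∈ B`, then every `x ∈ A ⊓ B` is `x * b + x * a ∈ AB + BA`;
in a CI-ring this gives `AB = A ⊓ B` for comaximal `A`, `B`. Comaximality with each factor
passes to products, so by induction `A₁⋯Aₙ = ⨅ i, Aᵢ`, the kernel of `R → ∏ i, R/Aᵢ`.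
That map is onto: from `Aᵢ ⊔ ⨅ j ≠ i, Aⱼ = ⊤` one gets `eᵢ` mapping to `Pi.single i 1`,
and `∑ rᵢ eᵢ` hits `(rᵢ mod Aᵢ)ᵢ`.
-/

namespace TwoSidedIdeal

variable {R : Type*} [Ring R]

theorem exists_add_eq_one_of_sup_eq_top {A B : TwoSidedIdeal R} (h : A ⊔ B = ⊤) :
    ∃ a ∈ A, ∃ b ∈ B, a + b = 1 :=
  mem_sup.mp (h ▸ mem_top R)

theorem mk'_eq_mk'_iff (I : TwoSidedIdeal R) {x y : R} :
    I.ringCon.mk' x = I.ringCon.mk' y ↔ x - y ∈ I :=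
  (RingCon.eq _).trans (rel_iff I x y)

theorem mul_mem_tmul {A B : TwoSidedIdeal R} {x y : R} (hx : x ∈ A) (hy : y ∈ B) :
    x * y ∈ tmul A B :=
  subset_span (Set.mul_mem_mul hx hy)

theorem tmul_le_inf (A B : TwoSidedIdeal R) : tmul A B ≤ A ⊓ B :=
  span_le.mpr <| by
    rintro _ ⟨a, ha, b, hb, rfl⟩
    exact ⟨A.mul_mem_right a b ha, B.mul_mem_left a b hb⟩

theorem inf_le_tmul_sup_tmul {A B : TwoSidedIdeal R} (h : A ⊔ B = ⊤) :
    A ⊓ B ≤ tmul A B ⊔ tmul B A := by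
  intro x hx
  obtain ⟨hxA, hxB⟩ := (mem_inf R).mp hx
  obtain ⟨a, ha, b, hb, hab⟩ := exists_add_eq_one_of_sup_eq_top h
  have hx_eq : x = x * b + x * a := by rw [← mul_add, add_comm, hab, mul_one]
  rw [hx_eq]
  exact (tmul A B ⊔ tmul B A).add_mem (mem_sup_left (mul_mem_tmul hxA hb))
    (mem_sup_right (mul_mem_tmul hxB ha))

theorem sup_tmul_eq_top {A B C : TwoSidedIdeal R} (hB : A ⊔ B = ⊤) (hC : A ⊔ C = ⊤) :
    A ⊔ tmul B C = ⊤ := by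
  obtain ⟨a, ha, b, hb, hab⟩ := exists_add_eq_one_of_sup_eq_top hB
  obtain ⟨a', ha', c, hc, hac⟩ := exists_add_eq_one_of_sup_eq_top hC
  refine (one_mem_iff _).mp <| mem_sup.mpr
    ⟨a + b * a', A.add_mem ha (A.mul_mem_left b a' ha'), b * c, mul_mem_tmul hb hc, ?_⟩
  rw [add_assoc, ← mul_add, hac, mul_one, hab]

theorem sup_inf_eq_top {A B C : TwoSidedIdeal R} (hB : A ⊔ B = ⊤) (hC : A ⊔ C = ⊤) :
    A ⊔ B ⊓ C = ⊤ :=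
  top_le_iff.mp <| (sup_tmul_eq_top hB hC).ge.trans (sup_le_sup_left (tmul_le_inf B C) A)

theorem sup_biInf_eq_top {ι : Type*} {A : TwoSidedIdeal R} {B : ι → TwoSidedIdeal R}
    {s : Finset ι} (h : ∀ j ∈ s, A ⊔ B j = ⊤) : A ⊔ ⨅ j ∈ s, B j = ⊤ := by
  classical
  induction s using Finset.induction_on with
  | empty => simp
  | insert j s _ ih =>
    rw [Finset.iInf_insert]
    exact sup_inf_eq_top (h j (by simp)) (ih fun k hk => h k (by simp [hk]))

theorem sup_tmulList_eq_top {A : TwoSidedIdeal R} {l : List (TwoSidedIdeal R)}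
    (h : ∀ B ∈ l, A ⊔ B = ⊤) : A ⊔ tmulList l = ⊤ := by
  induction l with
  | nil => exact sup_top_eq A
  | cons B l ih => exact sup_tmul_eq_top (h B (by simp)) (ih fun C hC => h C (by simp [hC]))

section ChineseRemainder

variable {ι : Type*} (A : ι → TwoSidedIdeal R)

theorem ringCon_iInf_eq_ker_pi :
    (⨅ i, A i).ringCon = RingCon.ker (RingHom.pi fun i => (A i).ringCon.mk') := by
  ext x y
  simp [rel_iff, mem_iInf, funext_iff, RingHom.pi_apply]

theorem exists_pi_mk'_eq_single [Finite ι] [DecidableEq ι]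
    (hA : Pairwise fun i j => A i ⊔ A j = ⊤) (i : ι) :
    ∃ e : R, RingHom.pi (fun j => (A j).ringCon.mk') e = Pi.single i 1 := by
  cases nonempty_fintype ι
  obtain ⟨a, ha, e, he, hae⟩ := exists_add_eq_one_of_sup_eq_top <|
    sup_biInf_eq_top (s := Finset.univ.erase i) fun j hj => hA (Finset.ne_of_mem_erase hj).symm
  refine ⟨e, funext fun j => ?_⟩
  rcases eq_or_ne j i with rfl | hji
  · rw [Pi.single_eq_same, RingHom.pi_apply, ← map_one (A j).ringCon.mk', mk'_eq_mk'_iff,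
      ← hae, sub_add_cancel_right]
    exact (A j).neg_mem ha
  · rw [Pi.single_eq_of_ne hji, RingHom.pi_apply, ← map_zero (A j).ringCon.mk', mk'_eq_mk'_iff,
      sub_zero]
    exact iInf₂_le (f := fun j _ => A j) j (by simp [hji]) he

theorem pi_mk'_surjective [Finite ι] (hA : Pairwise fun i j => A i ⊔ A j = ⊤) :
    Function.Surjective (RingHom.pi fun i => (A i).ringCon.mk') := by
  classical
  cases nonempty_fintype ι
  choose e he using exists_pi_mk'_eq_single A hA
  intro t
  choose r hr using fun i => (A i).ringCon.mk'_surjective (t i)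
  refine ⟨∑ i, r i * e i, ?_⟩
  simp only [map_sum, map_mul, he, ← Pi.single_mul_right, mul_one, RingHom.pi_apply, hr]
  exact Finset.univ_sum_single t

end ChineseRemainder

end TwoSidedIdeal

namespace IsCIRing

open TwoSidedIdeal

variable {R : Type*} [Ring R]

theorem tmul_eq_inf (hR : IsCIRing R) {A B : TwoSidedIdeal R} (h : A ⊔ B = ⊤) :
    tmul A B = A ⊓ B :=
  le_antisymm (tmul_le_inf A B) (by simpa [hR B A] using inf_le_tmul_sup_tmul h)

theorem tmulList_eq_sInf (hR : IsCIRing R) {l : List (TwoSidedIdeal R)}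
    (hl : l.Pairwise fun I J => I ⊔ J = ⊤) :
    tmulList l = sInf {I | I ∈ l} := by
  induction l with
  | nil => simp [tmulList]
  | cons I l ih =>
    obtain ⟨hI, hl⟩ := List.pairwise_cons.mp hl
    have hset : {J | J ∈ I :: l} = insert I {J | J ∈ l} := by ext; simp
    rw [hset, sInf_insert, ← ih hl]
    exact hR.tmul_eq_inf (sup_tmulList_eq_top hI)

theorem tmulList_ofFn_eq_iInf (hR : IsCIRing R) {n : ℕ} {A : Fin n → TwoSidedIdeal R}
    (hA : Pairwise fun i j => A i ⊔ A j = ⊤) :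
    tmulList (List.ofFn A) = ⨅ i, A i := by
  rw [hR.tmulList_eq_sInf (List.pairwise_ofFn.mpr fun _ _ hij => hA hij.ne), ← sInf_range]
  congr
  ext
  simp [List.mem_ofFn]

end IsCIRing

open TwoSidedIdeal

/-- For pairwise comaximal ideals of a CI-ring, the canonical map
R/(A₁⋯Aₙ) → (R/A₁) × ⋯ × (R/Aₙ) is a ring isomorphism. -/
theorem quotient_prod_equiv_pi {R : Type*} [Ring R] (hR : IsCIRing R)
    {n : ℕ} (A : Fin n → TwoSidedIdeal R) (hco : ∀ i j, i ≠ j → A i ⊔ A j = ⊤) :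
    ∃ e : (tmulList (List.ofFn A)).ringCon.Quotient ≃+* (∀ i, (A i).ringCon.Quotient),
      ∀ r : R, e ((tmulList (List.ofFn A)).ringCon.mk' r) = fun i => (A i).ringCon.mk' r := by
  have hA : Pairwise fun i j => A i ⊔ A j = ⊤ := fun i j => hco i j
  rw [hR.tmulList_ofFn_eq_iInf hA, ringCon_iInf_eq_ker_pi]
  exact ⟨RingCon.quotientKerEquivOfSurjective _ (pi_mk'_surjective A hA), fun _ => rfl⟩
end

section
/- Let R be a ring with identity and A a two-sided ideal of R. Suppose there exist integers s > 1 such that x^s ≡ x (mod A) for all x ∈ R. Then the quotient ring R/A is commutative. -/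
/-!
If `x ^ s = x` for all `x`, the ring is reduced. Were a commutator `c` nonzero, divide by a
two-sided ideal maximal among those avoiding `c`: every nonzero ideal of the quotient contains the
image of `c`, which for a reduced ring rules out zero divisors, so the quotient is a division ring.

In a division ring `D` with `x ^ s = x`, a noncentral `a` generates a finite field `K`
(`X ^ s - X` has finitely many roots). The map `x ↦ a * x - x * a` is `K`-linear and fixed by
`f ↦ f ^ |K|`, so it has an eigenvector `w` with eigenvalue `r ∈ Kˣ`, i.e. `w * a * w⁻¹ = a - r`.
Thus `w` normalizes `K`, and `K` together with `w` generates a finite subring of `D`, commutative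
by Wedderburn's theorem; but `w` does not commute with `a`.
-/

open Polynomial Pointwise

namespace Module.End

variable {K V : Type*} [AddCommGroup V]

theorem exists_hasEigenvector_of_aeval_prod_apply_eq_zero [CommRing K] [Module K V]
    (f : End K V) (s : Multiset K) {v : V} (hv : v ≠ 0)
    (h : aeval f (s.map fun r => X - C r).prod v = 0) :
    ∃ r ∈ s, ∃ w, f.HasEigenvector r w := by
  induction s using Multiset.induction_on with
  | empty => simp_all
  | cons r s ih =>
    set u := aeval f (s.map fun r => X - C r).prod v
    by_cases hu : u = 0
    · obtain ⟨r', hr', w, hw⟩ := ih hu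
      exact ⟨r', Multiset.mem_cons_of_mem hr', w, hw⟩
    · refine ⟨r, Multiset.mem_cons_self r s, u, hasEigenvector_iff.mpr ⟨?_, hu⟩⟩
      simpa [mem_eigenspace_iff, sub_eq_zero, u] using h

theorem exists_hasEigenvalue_ne_zero_of_pow_card_eq_self [Field K] [Fintype K] [Module K V]
    {f : End K V} (hf : f ^ Fintype.card K = f) (hf0 : f ≠ 0) :
    ∃ r ≠ 0, f.HasEigenvalue r := by
  classical
  obtain ⟨v, hv⟩ : ∃ v, f v ≠ 0 := by
    by_contra! h
    exact hf0 (LinearMap.ext h)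
  have hsplit : (X ^ Fintype.card K - X : K[X]) =
      X * ((Finset.univ.erase (0 : K)).val.map fun r => X - C r).prod := by
    have hq := Fintype.one_lt_card (α := K)
    have hmonic : (X ^ Fintype.card K - X : K[X]).Monic :=
      monic_X_pow_sub (by rw [degree_X]; exact_mod_cast hq)
    conv_lhs => rw [← prod_multiset_X_sub_C_of_monic_of_roots_card_eq hmonic (by
      rw [FiniteField.roots_X_pow_card_sub_X, FiniteField.X_pow_card_sub_X_natDegree_eq K hq,
        Finset.card_val, Finset.card_univ])]
    rw [FiniteField.roots_X_pow_card_sub_X, Finset.erase_val,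
      ← Multiset.cons_erase (Finset.mem_univ_val (0 : K)), Multiset.map_cons, Multiset.prod_cons,
      map_zero, sub_zero, Multiset.erase_cons_head]
  have hkill : aeval f ((Finset.univ.erase (0 : K)).val.map fun r => X - C r).prod (f v) = 0 := by
    have := congrArg (fun P => aeval f P v) hsplit
    simpa [hf, mul_comm X] using this.symm
  obtain ⟨r, hr, w, hw⟩ := exists_hasEigenvector_of_aeval_prod_apply_eq_zero f _ hv hkill
  exact ⟨r, Finset.ne_of_mem_erase hr, hasEigenvalue_of_hasEigenvector hw⟩

end Module.End

theorem Submonoid.exists_pow_mul_eq_mul_pow {M : Type*} [Monoid M] {S : Submonoid M} {w : M}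
    (hSw : ∀ x ∈ S, ∃ y ∈ S, w * x = y * w) (n : ℕ) {x : M} (hx : x ∈ S) :
    ∃ y ∈ S, w ^ n * x = y * w ^ n := by
  induction n generalizing x with
  | zero => exact ⟨x, hx, by simp⟩
  | succ n ih =>
    obtain ⟨y, hy, hxy⟩ := ih hx
    obtain ⟨z, hz, hyz⟩ := hSw y hy
    refine ⟨z, hz, ?_⟩
    rw [pow_succ', mul_assoc, hxy, ← mul_assoc, hyz, mul_assoc, ← pow_succ']

theorem Submonoid.finite_closure_insert {M : Type*} [Monoid M] {S : Submonoid M}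
    (hS : (S : Set M).Finite) {w : M} (hw : IsOfFinOrder w)
    (hSw : ∀ x ∈ S, ∃ y ∈ S, w * x = y * w) :
    (closure (insert w (S : Set M)) : Set M).Finite := by
  let N : Submonoid M :=
    { carrier := (S : Set M) * (powers w : Set M)
      one_mem' := ⟨1, S.one_mem, 1, one_mem _, mul_one 1⟩
      mul_mem' := by
        rintro _ _ ⟨x, hx, _, ⟨i, rfl⟩, rfl⟩ ⟨y, hy, _, ⟨j, rfl⟩, rfl⟩
        obtain ⟨z, hz, hyz⟩ := exists_pow_mul_eq_mul_pow hSw i hy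
        refine ⟨x * z, S.mul_mem hx hz, w ^ (i + j), ⟨i + j, rfl⟩, ?_⟩
        simp only [pow_add, mul_assoc]
        rw [← mul_assoc (w ^ i), hyz, mul_assoc] }
  have hle : closure (insert w (S : Set M)) ≤ N := by
    rw [closure_le, Set.insert_subset_iff]
    exact ⟨⟨1, S.one_mem, w, mem_powers w, one_mul w⟩,
      fun x hx => ⟨x, hx, 1, one_mem _, mul_one x⟩⟩
  exact (hS.mul hw.finite_powers).subset hle

theorem Subring.finite_closure_of_finite_submonoid_closure {A : Type*} [Ring A] (p : ℕ)
    [NeZero p] [CharP A p] {s : Set A} (hs : (Submonoid.closure s : Set A).Finite) :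
    (closure s : Set A).Finite := by
  let := ZMod.algebra A p
  have : Module.Finite (ZMod p) (Submodule.span (ZMod p) (Submonoid.closure s : Set A)) :=
    .span_of_finite _ hs
  have hfin : (Algebra.adjoin (ZMod p) s : Set A).Finite := by
    rw [← Subalgebra.coe_toSubmodule, Algebra.adjoin_eq_span]
    exact @Set.toFinite _ _ (Module.finite_of_finite (ZMod p))
  exact hfin.subset <|
    closure_le (t := (Algebra.adjoin (ZMod p) s).toSubring).mpr Algebra.subset_adjoin

theorem Subring.mul_comm_of_finite {D : Type*} [DivisionRing D] (T : Subring D) [Finite T]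
    {x y : D} (hx : x ∈ T) (hy : y ∈ T) : x * y = y * x :=
  congrArg Subtype.val ((Finite.isDomain_to_isField T).mul_comm ⟨x, hx⟩ ⟨y, hy⟩)

namespace Subfield

variable {D : Type*} [DivisionRing D]

def centralizer (s : Set D) : Subfield D :=
  { Subring.centralizer s with inv_mem' := fun _ hx => Set.inv_mem_centralizer₀ hx }

theorem mul_comm_of_mem_closure {s : Set D} (hs : ∀ x ∈ s, ∀ y ∈ s, x * y = y * x) {x y : D}
    (hx : x ∈ closure s) (hy : y ∈ closure s) : x * y = y * x := by
  have hs' : closure s ≤ centralizer s := closure_le.mpr fun z hz g hg => hs g hg z hz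
  have hcl : closure s ≤ centralizer (closure s) :=
    closure_le.mpr fun z hz g hg => ((hs' hg) z hz).symm
  exact hcl hy x hx

theorem conj_mem_closure {s : Set D} {w : D} (hw : w ≠ 0)
    (hs : ∀ x ∈ s, w * x * w⁻¹ ∈ closure s) {k : D} (hk : k ∈ closure s) :
    w * k * w⁻¹ ∈ closure s := by
  let conj : D →+* D :=
    MulSemiringAction.toRingHom (ConjAct Dˣ) D (ConjAct.toConjAct (Units.mk0 w hw))
  have hconj : ∀ x, conj x = w * x * w⁻¹ := fun x => by simp [conj, ConjAct.units_smul_def]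
  have hle : closure s ≤ (closure s).comap conj :=
    closure_le.mpr fun x hx => by simpa [mem_comap, hconj] using hs x hx
  simpa [hconj] using hle hk

abbrev fieldOfMulComm (K : Subfield D) (h : ∀ x ∈ K, ∀ y ∈ K, x * y = y * x) : Field K :=
  { (inferInstance : DivisionRing K) with mul_comm := fun x y => Subtype.ext (h x x.2 y y.2) }

theorem mul_comm_of_conj_mem (K : Subfield D) [Finite K]
    {w : D} (hw : IsOfFinOrder w) (hK : ∀ k ∈ K, w * k * w⁻¹ ∈ K) {k : D} (hk : k ∈ K) :
    w * k = k * w := by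
  have hw0 : w ≠ 0 := by
    rintro rfl
    obtain ⟨n, hn, h⟩ := isOfFinOrder_iff_pow_eq_one.mp hw
    simp [zero_pow hn.ne'] at h
  let p := ringChar K
  have : CharP K p := ringChar.charP K
  have : CharP D p := charP_of_injective_ringHom K.subtype_injective p
  have : NeZero p := ⟨CharP.char_ne_zero_of_finite K p⟩
  have hSw : ∀ x ∈ K.toSubmonoid, ∃ y ∈ K.toSubmonoid, w * x = y * w := fun x hx =>
    ⟨w * x * w⁻¹, hK x hx, by rw [mul_assoc _ w⁻¹, inv_mul_cancel₀ hw0, mul_one]⟩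
  have := (Subring.finite_closure_of_finite_submonoid_closure p
    (Submonoid.finite_closure_insert (Set.toFinite _) hw hSw)).to_subtype
  exact Subring.mul_comm_of_finite _ (Subring.subset_closure (Set.mem_insert _ _))
    (Subring.subset_closure (Set.mem_insert_of_mem _ hk))

end Subfield

theorem finite_of_forall_pow_eq_self {K : Type*} [CommRing K] [IsDomain K] {s : ℕ} (hs : 1 < s)
    (h : ∀ x : K, x ^ s = x) : Finite K := by
  have hP : (X ^ s - X : K[X]) ≠ 0 :=
    (monic_X_pow_sub (by rw [degree_X]; exact_mod_cast hs)).ne_zero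
  exact Set.finite_univ_iff.mp <| (finite_setOfPred_isRoot hP).subset fun x _ => by simp [h]

theorem Commute.sub_pow_card_eq_sub {K A : Type*} [Field K] [Fintype K] [Ring A] [Algebra K A]
    [Nontrivial A] {x y : A} (hxy : Commute x y) (hx : x ^ Fintype.card K = x)
    (hy : y ^ Fintype.card K = y) : (x - y) ^ Fintype.card K = x - y := by
  have := ringChar.charP K
  obtain ⟨n, hp, hq⟩ := FiniteField.card K (ringChar K)
  have : Fact (ringChar K).Prime := ⟨hp⟩
  have : CharP A (ringChar K) := charP_of_injective_algebraMap (algebraMap K A).injective _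
  rw [hq, sub_pow_char_pow_of_commute _ _ hxy, ← hq, hx, hy]

theorem exists_mul_sub_mul_eq_mul {D : Type*} [DivisionRing D] {a b : D} (hab : a * b ≠ b * a)
    [Finite (Subfield.closure {a})] :
    ∃ r ∈ Subfield.closure {a}, r ≠ 0 ∧ ∃ w : D, w ≠ 0 ∧ a * w - w * a = r * w := by
  set K := Subfield.closure ({a} : Set D)
  have hKcomm : ∀ x ∈ K, ∀ y ∈ K, x * y = y * x := fun x hx y hy =>
    Subfield.mul_comm_of_mem_closure (by simp) hx hy
  have haK : a ∈ K := Subfield.subset_closure rfl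
  let := K.fieldOfMulComm hKcomm
  let := Fintype.ofFinite K
  let L : Module.End K D :=
    { toFun := (a * ·)
      map_add' := mul_add a
      map_smul' := fun k x => by
        simp only [Subfield.smul_def, smul_eq_mul, RingHom.id_apply]
        rw [← mul_assoc, ← mul_assoc, hKcomm a haK k k.2] }
  let R : Module.End K D := LinearMap.mulRight K a
  have hLR : Commute L R := LinearMap.ext fun x => (mul_assoc a x a).symm
  have haq : a ^ Fintype.card K = a :=
    congrArg Subtype.val (FiniteField.pow_card (⟨a, haK⟩ : K))
  have hLq : L ^ Fintype.card K = L := LinearMap.ext fun x => by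
    rw [Module.End.pow_apply]
    change (a * ·)^[Fintype.card K] x = a * x
    rw [mul_left_iterate, haq]
  have hRq : R ^ Fintype.card K = R := LinearMap.ext fun x => by
    rw [Module.End.pow_apply]
    change (· * a)^[Fintype.card K] x = x * a
    rw [mul_right_iterate, haq]
  have hδ0 : L - R ≠ 0 := fun h =>
    hab (by simpa [L, R, sub_eq_zero] using LinearMap.congr_fun h b)
  obtain ⟨r, hr0, hr⟩ := Module.End.exists_hasEigenvalue_ne_zero_of_pow_card_eq_self
    (hLR.sub_pow_card_eq_sub hLq hRq) hδ0
  obtain ⟨w, hw⟩ := hr.exists_hasEigenvector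
  refine ⟨r, r.2, by exact_mod_cast hr0, w, hw.2, ?_⟩
  simpa [L, R, Subfield.smul_def] using hw.apply_eq_smul

theorem DivisionRing.mul_comm_of_forall_pow_eq_self {D : Type*} [DivisionRing D] {s : ℕ}
    (hs : 1 < s) (h : ∀ x : D, x ^ s = x) (a b : D) : a * b = b * a := by
  by_contra hab
  set K := Subfield.closure ({a} : Set D)
  have hKcomm : ∀ x ∈ K, ∀ y ∈ K, x * y = y * x := fun x hx y hy =>
    Subfield.mul_comm_of_mem_closure (by simp) hx hy
  have : Finite K := by
    let := K.fieldOfMulComm hKcomm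
    exact finite_of_forall_pow_eq_self hs fun x => Subtype.ext (by simp [h])
  obtain ⟨r, hrK, hr0, w, hw0, hrw⟩ := exists_mul_sub_mul_eq_mul hab
  have hconj : w * a * w⁻¹ = a - r := by
    rw [sub_eq_iff_eq_add] at hrw
    rw [mul_inv_eq_iff_eq_mul₀ hw0, sub_mul, hrw]
    abel
  have hw : IsOfFinOrder w := isOfFinOrder_iff_pow_eq_one.mpr ⟨s - 1, by omega,
    mul_right_cancel₀ hw0 (by rw [← pow_succ, Nat.sub_add_cancel hs.le, h, one_mul])⟩
  have hwa : w * a = a * w := K.mul_comm_of_conj_mem hw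
    (fun k hk => Subfield.conj_mem_closure hw0 (fun x hx => by
      rw [Set.mem_singleton_iff.mp hx, hconj]
      exact sub_mem (Subfield.subset_closure rfl) hrK) hk)
    (Subfield.subset_closure rfl)
  exact mul_ne_zero hr0 hw0 (by rw [← hrw, hwa, sub_self])

namespace IsReduced

variable {R : Type*} [Ring R] [IsReduced R]

theorem mul_eq_zero_symm {u v : R} (h : u * v = 0) : v * u = 0 :=
  eq_zero_of_pow_eq_zero (n := 2) (by rw [sq, mul_assoc, ← mul_assoc u, h, zero_mul, mul_zero])

theorem mul_mul_eq_zero {u v : R} (h : u * v = 0) (t : R) : u * t * v = 0 :=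
  eq_zero_of_pow_eq_zero (n := 2) (by
    rw [sq, show u * t * v * (u * t * v) = u * t * (v * u) * (t * v) by noncomm_ring,
      mul_eq_zero_symm h, mul_zero, zero_mul])

end IsReduced

theorem isReduced_of_pow_eq_self {R : Type*} [Ring R] {s : ℕ} (hs : 1 < s)
    (h : ∀ x : R, x ^ s = x) : IsReduced R :=
  (isReduced_iff_pow_one_lt s hs).mpr fun x hx => (h x).symm.trans hx

namespace TwoSidedIdeal

variable {R : Type*} [Ring R]

theorem mem_sSup_of_directedOn {S : Set (TwoSidedIdeal R)} (hne : S.Nonempty)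
    (hS : DirectedOn (· ≤ ·) S) {x : R} : x ∈ sSup S ↔ ∃ I ∈ S, x ∈ I := by
  refine ⟨fun hx => ?_, fun ⟨I, hI, hxI⟩ => le_sSup hI hxI⟩
  let U : TwoSidedIdeal R := .mk' {x | ∃ I ∈ S, x ∈ I}
    (hne.imp fun I hI => ⟨hI, I.zero_mem⟩)
    (fun ⟨I, hI, hx⟩ ⟨J, hJ, hy⟩ => by
      obtain ⟨K, hK, hIK, hJK⟩ := hS I hI J hJ
      exact ⟨K, hK, K.add_mem (hIK hx) (hJK hy)⟩)
    (fun ⟨I, hI, hx⟩ => ⟨I, hI, I.neg_mem hx⟩)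
    (fun ⟨I, hI, hy⟩ => ⟨I, hI, I.mul_mem_left _ _ hy⟩)
    (fun ⟨I, hI, hx⟩ => ⟨I, hI, I.mul_mem_right _ _ hx⟩)
  have hSU : sSup S ≤ U := sSup_le fun I hI y hy => (mem_mk' _ _ _ _ _ _ _).mpr ⟨I, hI, hy⟩
  simpa [U, mem_mk'] using hSU hx

theorem exists_maximal_not_mem {c : R} (hc : c ≠ 0) :
    ∃ I : TwoSidedIdeal R, Maximal (fun J => c ∉ J) I := by
  obtain ⟨I, -, hI⟩ := zorn_le_nonempty₀ {J : TwoSidedIdeal R | c ∉ J}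
    (fun ch hch hchain J hJ => ⟨sSup ch,
      fun hc => by
        obtain ⟨I, hI, hcI⟩ := (mem_sSup_of_directedOn ⟨J, hJ⟩ hchain.directedOn).mp hc
        exact hch hI hcI,
      fun _ => le_sSup⟩)
    ⊥ (by simpa [mem_bot] using hc)
  exact ⟨I, hI⟩

theorem mk_mem_of_maximal_not_mem {c : R} {I : TwoSidedIdeal R} (hI : Maximal (fun J => c ∉ J) I)
    {J : TwoSidedIdeal I.ringCon.Quotient} (hJ : J ≠ ⊥) : I.ringCon.mk' c ∈ J := by
  have hker : ∀ x, I.ringCon.mk' x = 0 ↔ x ∈ I := fun x => by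
    rw [← mem_ker, ker_ringCon_mk']
  by_contra hcJ
  have hIJ : I ≤ J.comap I.ringCon.mk' := fun x hx => by
    rw [mem_comap, (hker x).mpr hx]
    exact J.zero_mem
  have hJI : J.comap I.ringCon.mk' ≤ I := hI.2 (by simpa [mem_comap] using hcJ) hIJ
  refine hJ (eq_bot_iff.mpr fun y hy => ?_)
  obtain ⟨x, rfl⟩ := I.ringCon.mk'_surjective y
  exact (mem_bot _).mpr ((hker x).mpr (hJI ((mem_comap _).mpr hy)))

def rightAnnihilator [IsReduced R] (u : R) : TwoSidedIdeal R :=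
  .mk' {z | u * z = 0} (mul_zero u)
    (fun hx hy => by simp_all [mul_add])
    (fun hx => by simp_all)
    (fun {x _} hy => (mul_assoc u x _).symm.trans (IsReduced.mul_mul_eq_zero hy x))
    (fun hx => by simp_all [← mul_assoc])

theorem mem_rightAnnihilator [IsReduced R] {u z : R} : z ∈ rightAnnihilator u ↔ u * z = 0 :=
  mem_mk' ..

end TwoSidedIdeal

theorem noZeroDivisors_of_mem_of_ne_bot {R : Type*} [Ring R] [IsReduced R] {c : R} (hc0 : c ≠ 0)
    (hc : ∀ J : TwoSidedIdeal R, J ≠ ⊥ → c ∈ J) : NoZeroDivisors R := by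
  have hann : ∀ {u z : R}, u * z = 0 → z ≠ 0 → u * c = 0 := fun huz hz =>
    TwoSidedIdeal.mem_rightAnnihilator.mp <| hc _ fun hbot => hz <| by
      rw [← TwoSidedIdeal.mem_bot, ← hbot]
      exact TwoSidedIdeal.mem_rightAnnihilator.mpr huz
  refine ⟨fun {u v} huv => or_iff_not_imp_right.mpr fun hv => ?_⟩
  by_contra hu
  have hcc : c * c = 0 := hann (IsReduced.mul_eq_zero_symm (hann huv hv)) hu
  exact hc0 (eq_zero_of_pow_eq_zero (n := 2) (by rwa [sq]))

theorem isUnit_of_pow_eq_self {R : Type*} [Ring R] [NoZeroDivisors R] {s : ℕ} (hs : 1 < s)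
    {x : R} (hx : x ^ s = x) (hx0 : x ≠ 0) : IsUnit x := by
  have h : (x ^ (s - 1) - 1) * x = 0 := by
    rw [sub_mul, ← pow_succ, Nat.sub_add_cancel hs.le, hx, one_mul, sub_self]
  refine IsUnit.of_pow_eq_one (n := s - 1) ?_ (by omega)
  exact sub_eq_zero.mp ((mul_eq_zero.mp h).resolve_right hx0)

theorem mul_comm_of_forall_pow_eq_self {R : Type*} [Ring R] {s : ℕ} (hs : 1 < s)
    (h : ∀ x : R, x ^ s = x) (a b : R) : a * b = b * a := by
  by_contra hab
  obtain ⟨I, hI⟩ := TwoSidedIdeal.exists_maximal_not_mem (sub_ne_zero.mpr hab)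
  set π := I.ringCon.mk'
  have hQ : ∀ z : I.ringCon.Quotient, z ^ s = z := fun z => by
    obtain ⟨x, rfl⟩ := I.ringCon.mk'_surjective z
    rw [← map_pow, h]
  have hc0 : π (a * b - b * a) ≠ 0 := by
    rw [Ne, ← TwoSidedIdeal.mem_ker, TwoSidedIdeal.ker_ringCon_mk']
    exact hI.prop
  have : IsReduced I.ringCon.Quotient := isReduced_of_pow_eq_self hs hQ
  have : NoZeroDivisors I.ringCon.Quotient :=
    noZeroDivisors_of_mem_of_ne_bot hc0 fun _ => TwoSidedIdeal.mk_mem_of_maximal_not_mem hI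
  have : Nontrivial I.ringCon.Quotient := ⟨⟨_, _, hc0⟩⟩
  let : DivisionRing I.ringCon.Quotient := .ofIsUnitOrEqZero fun z =>
    (eq_or_ne z 0).symm.imp_left (isUnit_of_pow_eq_self hs (hQ z))
  exact hc0 (by rw [map_sub, map_mul, map_mul, DivisionRing.mul_comm_of_forall_pow_eq_self hs hQ,
    sub_self])

/-- If there is an integer s > 1 with x^s ≡ x (mod A) for all x ∈ R, then the
quotient ring R/A is commutative. -/
theorem quotient_commutative_of_pow_congr {R : Type*} [Ring R] (A : TwoSidedIdeal R)
    (s : ℕ) (hs : 1 < s) (h : ∀ x : R, x ^ s - x ∈ A) :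
    ∀ a b : A.ringCon.Quotient, a * b = b * a := by
  refine mul_comm_of_forall_pow_eq_self hs fun z => ?_
  obtain ⟨x, rfl⟩ := A.ringCon.mk'_surjective z
  rw [← map_pow]
  exact A.ringCon.eq.mpr ((A.rel_iff _ _).mpr (h x))
end

section
/- Let R be a CI-ring with identity and A a two-sided ideal of R with R/A finite and φ(A) = |U(R/A)| > 2. If A is an RSA-ideal with respect to one exponent pair (e, d) (i.e., x^{ed} ≡ x mod A for some e, d with gcd(e, φ(A)) = 1 and ed ≡ 1 mod φ(A)), then x^s ≡ x (mod A) holds for every integer s > 1 with s ≡ 1 (mod φ(A)); in particular any e coprime to φ(A) is an admissible encryption exponent. -/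
open Pointwise

/-- In a finite ring where `y ^ N = y` for all `y` (with `N ≥ 3`), every element
satisfies `y ^ (|Sˣ| + 1) = y`. -/
theorem pow_card_units_add_one_eq {S : Type*} [Ring S] [Finite S] {N : ℕ} (hN : 3 ≤ N)
    (h : ∀ y : S, y ^ N = y) (y : S) : y ^ (Nat.card Sˣ + 1) = y := by
  set p : S := y ^ (N - 1) with hp
  set v : S := y ^ (N - 2) with hv
  have hyv : y * v = p := by rw [hv, hp, ← pow_succ']; congr 1; omega
  have hvy : v * y = p := by rw [hv, hp, ← pow_succ]; congr 1; omega
  have hpy : p * y = y := by rw [hp, ← pow_succ]; have : N - 1 + 1 = N := by omega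
                             rw [this, h]
  have hyp : y * p = y := by rw [hp, ← pow_succ']; have : N - 1 + 1 = N := by omega
                             rw [this, h]
  have hpv : p * v = v := by
    rw [hp, hv, ← pow_add]
    have h1 : N - 1 + (N - 2) = N + (N - 3) := by omega
    rw [h1, pow_add, h, ← pow_succ']
    congr 1; omega
  have hvp : v * p = v := by
    rw [hp, hv, ← pow_add]
    have h1 : N - 2 + (N - 1) = N + (N - 3) := by omega
    rw [h1, pow_add, h, ← pow_succ']
    congr 1; omega
  have hpp : IsIdempotentElem p := by
    show p * p = p
    rw [hp, ← pow_add]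
    have h1 : N - 1 + (N - 1) = N + (N - 2) := by omega
    rw [h1, pow_add, h, ← pow_succ']
    congr 1; omega
  have huv : (y + (1 - p)) * (v + (1 - p)) = 1 := by
    have : y * (1 - p) = 0 := by rw [mul_sub, mul_one, hyp, sub_self]
    have h2 : (1 - p) * v = 0 := by rw [sub_mul, one_mul, hpv, sub_self]
    have h3 : (1 - p) * (1 - p) = 1 - p := (hpp.one_sub).eq
    rw [add_mul, mul_add, mul_add, hyv, this, h2, h3, add_zero, zero_add]
    abel
  have hvu : (v + (1 - p)) * (y + (1 - p)) = 1 := by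
    have : v * (1 - p) = 0 := by rw [mul_sub, mul_one, hvp, sub_self]
    have h2 : (1 - p) * y = 0 := by rw [sub_mul, one_mul, hpy, sub_self]
    have h3 : (1 - p) * (1 - p) = 1 - p := (hpp.one_sub).eq
    rw [add_mul, mul_add, mul_add, hvy, this, h2, h3, add_zero, zero_add]
    abel
  set U : Sˣ := ⟨y + (1 - p), v + (1 - p), huv, hvu⟩ with hU
  have hUpow : (y + (1 - p)) ^ Nat.card Sˣ = 1 := by
    have h2 := congrArg Units.val (pow_card_eq_one' (x := U))
    rw [Units.val_pow_eq_pow_val, Units.val_one] at h2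
    exact h2
  have hup : (y + (1 - p)) * p = y := by
    rw [add_mul, sub_mul, one_mul, hpp.eq, sub_self, add_zero, hyp]
  have hpu : p * (y + (1 - p)) = y := by
    rw [mul_add, mul_sub, mul_one, hpp.eq, sub_self, add_zero, hpy]
  have hcomm : Commute (y + (1 - p)) p := by rw [Commute, SemiconjBy, hup, hpu]
  calc y ^ (Nat.card Sˣ + 1) = ((y + (1 - p)) * p) ^ (Nat.card Sˣ + 1) := by rw [hup]
    _ = (y + (1 - p)) ^ (Nat.card Sˣ + 1) * p ^ (Nat.card Sˣ + 1) := hcomm.mul_pow _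
    _ = (y + (1 - p)) ^ Nat.card Sˣ * (y + (1 - p)) * p := by
        rw [pow_succ, hpp.pow_succ_eq]
    _ = y := by rw [hUpow, one_mul, hup]

/-- If A is an RSA-ideal of a CI-ring with respect to one exponent pair (e, d), then
x^s ≡ x (mod A) holds for every s > 1 with s ≡ 1 (mod φ(A)); in particular any
exponent coprime to φ(A) is admissible. -/
theorem rsa_ideal_universal_exponent {R : Type*} [Ring R] (hR : IsCIRing R)
    (A : TwoSidedIdeal R) [Finite A.ringCon.Quotient]
    (hphi : 2 < Nat.card (A.ringCon.Quotient)ˣ)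
    (e d : ℕ) (he1 : 1 < e) (he2 : e < Nat.card (A.ringCon.Quotient)ˣ)
    (hd1 : 1 < d) (hd2 : d < Nat.card (A.ringCon.Quotient)ˣ)
    (hgcd : Nat.gcd e (Nat.card (A.ringCon.Quotient)ˣ) = 1)
    (hed : e * d ≡ 1 [MOD Nat.card (A.ringCon.Quotient)ˣ])
    (hpow : ∀ x : R, x ^ (e * d) - x ∈ A) :
    ∀ s : ℕ, 1 < s → s ≡ 1 [MOD Nat.card (A.ringCon.Quotient)ˣ] →
      ∀ x : R, x ^ s - x ∈ A := by
  set φ := Nat.card (A.ringCon.Quotient)ˣ with hφ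
  -- the quotient ring satisfies y ^ (e*d) = y
  have hQ : ∀ y : A.ringCon.Quotient, y ^ (e * d) = y := by
    intro y
    obtain ⟨x, rfl⟩ := Quotient.exists_rep y
    have hrel : A.ringCon (x ^ (e * d)) x := (A.rel_iff (x ^ (e * d)) x).mpr (hpow x)
    have h2 : ((x ^ (e * d) : R) : A.ringCon.Quotient) = (x : A.ringCon.Quotient) :=
      (RingCon.eq _).mpr hrel
    rw [RingCon.coe_pow] at h2
    exact h2
  have hN : 3 ≤ e * d := by nlinarith
  have hkey : ∀ y : A.ringCon.Quotient, y ^ (φ + 1) = y :=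
    pow_card_units_add_one_eq hN hQ
  -- iterate: y ^ (m * φ + 1) = y
  have hiter : ∀ m : ℕ, ∀ y : A.ringCon.Quotient, y ^ (m * φ + 1) = y := by
    intro m
    induction m with
    | zero => intro y; simp
    | succ n ih =>
      intro y
      have h1 : (n + 1) * φ + 1 = (n * φ + 1) + φ := by ring
      rw [h1, pow_add, ih, ← pow_succ']
      exact hkey y
  intro s hs1 hs x
  have hmod : s % φ = 1 := by
    have h1 := hs
    unfold Nat.ModEq at h1
    rwa [Nat.one_mod_eq_one.mpr (by omega)] at h1
  have hsrep : (s / φ) * φ + 1 = s := by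
    have h1 := Nat.div_add_mod s φ
    rw [Nat.mul_comm] at h1
    omega
  have hq : ((x : A.ringCon.Quotient)) ^ s = x := by
    rw [← hsrep]; exact hiter _ _
  have h2 : ((x ^ s : R) : A.ringCon.Quotient) = (x : A.ringCon.Quotient) := by
    rw [RingCon.coe_pow]; exact hq
  exact (A.rel_iff _ _).mp ((RingCon.eq _).mp h2)
end

section
/- Let R be a ring with identity in which every two-sided ideal is principal as a left ideal and as a right ideal, and assume R is a domain (noncommutative principal ideal domain). Then any two two-sided ideals of R commute: AB = BA. -/
open Pointwise

/-!
Every two-sided ideal `I` has a normal generator, `I = pR = Rp`: a right generator `a` and a left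
generator `b` differ by a right factor that can be cancelled. If `Q = qR = Rq` contains `B`, then
`B = Q · (B : Q)` where `(B : Q) = {x | Q x ⊆ B}`, and the domain property makes `(B : Q)` strictly
larger than `B` unless `B = 0` or `Q = R`. Distinct maximal ideals `P`, `Q` are comaximal, and
`PQ = P ∩ Q = QP` because `P` is normally generated. Noetherian induction, peeling off a maximal
factor `Q` of `B`, shows that an ideal commuting with every maximal ideal commutes with every
ideal; applying this twice gives `AB = BA`.
-/

namespace TwoSidedIdeal

variable {R : Type*} [Ring R]

theorem asIdeal_injective : Function.Injective (asIdeal : TwoSidedIdeal R → Ideal R) :=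
  fun I J h => by ext x; rw [← mem_asIdeal, h, mem_asIdeal]

instance [IsNoetherianRing R] : WellFoundedGT (TwoSidedIdeal R) :=
  (OrderEmbedding.ofMapLEIff asIdeal fun _ _ => Iff.rfl).wellFoundedGT

theorem asIdeal_tmul (A B : TwoSidedIdeal R) : (tmul A B).asIdeal = A.asIdeal * B.asIdeal := by
  refine le_antisymm ?_ (Ideal.mul_le.2 fun a ha b hb => subset_span ⟨a, ha, b, hb, rfl⟩)
  rw [← Ideal.asIdeal_toTwoSided (A.asIdeal * B.asIdeal)]
  refine asIdeal.monotone (span_le.2 ?_)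
  rintro _ ⟨a, ha, b, hb, rfl⟩
  exact Ideal.mem_toTwoSided.2 (Ideal.mul_mem_mul ha hb)

theorem tmul_assoc (A B C : TwoSidedIdeal R) : tmul (tmul A B) C = tmul A (tmul B C) :=
  asIdeal_injective <| by simp only [asIdeal_tmul, Ideal.mul_assoc]

theorem tmul_bot (A : TwoSidedIdeal R) : tmul A ⊥ = ⊥ :=
  asIdeal_injective <| by simp [asIdeal_tmul]

theorem bot_tmul (A : TwoSidedIdeal R) : tmul ⊥ A = ⊥ :=
  asIdeal_injective <| by simp [asIdeal_tmul]

theorem tmul_top (A : TwoSidedIdeal R) : tmul A ⊤ = A :=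
  asIdeal_injective <| by simp [asIdeal_tmul, Ideal.mul_top]

theorem top_tmul (A : TwoSidedIdeal R) : tmul ⊤ A = A :=
  asIdeal_injective <| by simp [asIdeal_tmul]

def IsNormalGenerator (I : TwoSidedIdeal R) (p : R) : Prop :=
  (∀ x, x ∈ I ↔ ∃ r, p * r = x) ∧ ∀ x, x ∈ I ↔ ∃ r, r * p = x

theorem exists_left_generator {I : TwoSidedIdeal R} (h : I.asIdeal.IsPrincipal) :
    ∃ b, ∀ x, x ∈ I ↔ ∃ r, r * b = x := by
  obtain ⟨b, hb⟩ := h.principal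
  exact ⟨b, fun x => by rw [← mem_asIdeal, hb, Submodule.mem_span_singleton]; rfl⟩

theorem exists_right_generator {I : TwoSidedIdeal R} (h : I.asIdealOpposite.IsPrincipal) :
    ∃ a, ∀ x, x ∈ I ↔ ∃ r, a * r = x := by
  obtain ⟨a, ha⟩ := h.principal
  refine ⟨a.unop, fun x => ?_⟩
  rw [← MulOpposite.unop_op x, ← mem_asIdealOpposite, ha, Submodule.mem_span_singleton]
  exact ⟨fun ⟨r, hr⟩ => ⟨r.unop, congrArg MulOpposite.unop hr⟩,
    fun ⟨r, hr⟩ => ⟨MulOpposite.op r, congrArg MulOpposite.op hr⟩⟩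

/-- If `I = aR = Rb` then `b = at` and `a = uat`; cancelling `t` turns `xt ∈ Rb = Rat` into
`x ∈ Ra`. -/
theorem isNormalGenerator_of_left_of_right [IsDomain R] {I : TwoSidedIdeal R} {a b : R}
    (ha : ∀ x, x ∈ I ↔ ∃ r, a * r = x) (hb : ∀ x, x ∈ I ↔ ∃ r, r * b = x) :
    I.IsNormalGenerator a := by
  have haI : a ∈ I := (ha a).2 ⟨1, mul_one a⟩
  refine ⟨ha, fun x => ⟨fun hx => ?_, fun ⟨r, hr⟩ => hr ▸ I.mul_mem_left r a haI⟩⟩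
  rcases eq_or_ne a 0 with rfl | ha0
  · obtain ⟨r, rfl⟩ := (ha x).1 hx
    exact ⟨0, by simp⟩
  obtain ⟨t, rfl⟩ := (ha b).1 ((hb b).2 ⟨1, one_mul b⟩)
  obtain ⟨u, hu⟩ := (hb a).1 haI
  have ht0 : t ≠ 0 := by rintro rfl; simp [eq_comm, ha0] at hu
  obtain ⟨s, hs⟩ := (hb (x * t)).1 (I.mul_mem_right x t hx)
  exact ⟨s, mul_right_cancel₀ ht0 (by rw [← hs, mul_assoc])⟩

theorem exists_isNormalGenerator [IsDomain R] (hleft : ∀ I : Ideal R, I.IsPrincipal)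
    (hright : ∀ I : Ideal Rᵐᵒᵖ, I.IsPrincipal) (I : TwoSidedIdeal R) :
    ∃ p, I.IsNormalGenerator p := by
  obtain ⟨a, ha⟩ := exists_right_generator (hright I.asIdealOpposite)
  obtain ⟨b, hb⟩ := exists_left_generator (hleft I.asIdeal)
  exact ⟨a, isNormalGenerator_of_left_of_right ha hb⟩

def colon (B Q : TwoSidedIdeal R) : TwoSidedIdeal R :=
  mk' {x | ∀ q ∈ Q, q * x ∈ B} (fun q _ => by simp [B.zero_mem])
    (fun hx hy q hq => by rw [mul_add]; exact B.add_mem (hx q hq) (hy q hq))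
    (fun hx q hq => by rw [mul_neg]; exact B.neg_mem (hx q hq))
    (fun {r x} hx q hq => by rw [← mul_assoc]; exact hx _ (Q.mul_mem_right q r hq))
    (fun {x r} hx q hq => by rw [← mul_assoc]; exact B.mul_mem_right _ r (hx q hq))

theorem mem_colon {B Q : TwoSidedIdeal R} {x : R} : x ∈ colon B Q ↔ ∀ q ∈ Q, q * x ∈ B :=
  mem_mk' ..

theorem le_colon (B Q : TwoSidedIdeal R) : B ≤ colon B Q :=
  fun x hx => mem_colon.2 fun q _ => B.mul_mem_left q x hx

theorem tmul_colon_le (B Q : TwoSidedIdeal R) : tmul Q (colon B Q) ≤ B := by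
  rw [tmul, span_le]
  rintro _ ⟨q, hq, x, hx, rfl⟩
  exact mem_colon.1 hx q hq

namespace IsNormalGenerator

variable {P Q B : TwoSidedIdeal R} {p q b : R}

theorem mem_colon_of_mul_mem (hq : Q.IsNormalGenerator q) {y : R} (hy : q * y ∈ B) :
    y ∈ colon B Q :=
  mem_colon.2 fun z hz => by
    obtain ⟨r, rfl⟩ := (hq.2 z).1 hz
    rw [mul_assoc]
    exact B.mul_mem_left r _ hy

theorem tmul_colon_eq (hq : Q.IsNormalGenerator q) (hBQ : B ≤ Q) : tmul Q (colon B Q) = B := by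
  refine le_antisymm (tmul_colon_le B Q) fun x hx => ?_
  obtain ⟨y, rfl⟩ := (hq.1 x).1 (hBQ hx)
  exact subset_span ⟨q, (hq.1 q).2 ⟨1, mul_one q⟩, y, hq.mem_colon_of_mul_mem hx, rfl⟩

/-- If `colon B Q = B`, the factorisation `b = q * y` gives `y = c * b`, hence `q * c = 1`. -/
theorem lt_colon [IsDomain R] (hq : Q.IsNormalGenerator q) (hb : ∀ x, x ∈ B ↔ ∃ r, r * b = x)
    (hBQ : B ≤ Q) (hB : B ≠ ⊥) (hQ : Q ≠ ⊤) : B < colon B Q := by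
  refine (le_colon B Q).lt_of_ne fun hcolon => hQ ?_
  have hb0 : b ≠ 0 := by
    rintro rfl
    exact hB (eq_bot_iff.2 fun x hx => by obtain ⟨r, rfl⟩ := (hb x).1 hx; simp)
  have hbB : b ∈ B := (hb b).2 ⟨1, one_mul b⟩
  obtain ⟨y, hy⟩ := (hq.1 b).1 (hBQ hbB)
  have hyB : y ∈ B := hcolon ▸ hq.mem_colon_of_mul_mem (hy ▸ hbB)
  obtain ⟨c, rfl⟩ := (hb y).1 hyB
  have hqc : q * c = 1 := mul_right_cancel₀ hb0 (by rw [one_mul, mul_assoc, hy])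
  exact (one_mem_iff Q).1 (hqc ▸ Q.mul_mem_right q c ((hq.1 q).2 ⟨1, mul_one q⟩))

/-- Writing `x = p * y` and `1 = s * p + v` with `v ∈ Q`, we get `y = s * x + v * y ∈ Q`. -/
theorem tmul_eq_inf_of_sup_eq_top (hp : P.IsNormalGenerator p) (h : P ⊔ Q = ⊤) :
    tmul P Q = P ⊓ Q := by
  refine le_antisymm (tmul_le_inf P Q) fun x hx => ?_
  obtain ⟨hxP, hxQ⟩ := (mem_inf _).1 hx
  obtain ⟨y, rfl⟩ := (hp.1 x).1 hxP
  obtain ⟨u, hu, v, hv, huv⟩ := mem_sup.1 ((one_mem_iff _).2 h)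
  obtain ⟨s, rfl⟩ := (hp.2 u).1 hu
  have hyQ : y ∈ Q := by
    rw [← one_mul y, ← huv, add_mul, mul_assoc]
    exact Q.add_mem (Q.mul_mem_left s _ hxQ) (Q.mul_mem_right v y hv)
  exact subset_span ⟨p, (hp.1 p).2 ⟨1, mul_one p⟩, y, hyQ, rfl⟩

end IsNormalGenerator

theorem tmul_comm_of_isCoatom {P Q : TwoSidedIdeal R} {p q : R} (hp : P.IsNormalGenerator p)
    (hq : Q.IsNormalGenerator q) (hP : IsCoatom P) (hQ : IsCoatom Q) : tmul P Q = tmul Q P := by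
  rcases eq_or_ne P Q with rfl | hne
  · rfl
  have h := hP.sup_eq_top_of_ne hQ hne
  rw [hp.tmul_eq_inf_of_sup_eq_top h, hq.tmul_eq_inf_of_sup_eq_top (sup_comm P Q ▸ h), inf_comm]

theorem tmul_comm_of_forall_isCoatom [IsDomain R] [WellFoundedGT (TwoSidedIdeal R)]
    (hgen : ∀ I : TwoSidedIdeal R, ∃ p, I.IsNormalGenerator p) {X : TwoSidedIdeal R}
    (hX : ∀ Q, IsCoatom Q → tmul X Q = tmul Q X) (B : TwoSidedIdeal R) :
    tmul X B = tmul B X := by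
  induction B using WellFoundedGT.induction with
  | _ B ih =>
  rcases eq_or_ne B ⊥ with rfl | hB
  · rw [tmul_bot, bot_tmul]
  obtain rfl | ⟨Q, hQ, hBQ⟩ := eq_top_or_exists_le_coatom B
  · rw [tmul_top, top_tmul]
  obtain ⟨q, hq⟩ := hgen Q
  obtain ⟨b, hb⟩ := hgen B
  have hlt : B < colon B Q := hq.lt_colon hb.2 hBQ hB hQ.1
  rw [← hq.tmul_colon_eq hBQ, ← tmul_assoc, hX Q hQ, tmul_assoc, ih _ hlt, tmul_assoc]

end TwoSidedIdeal

/-- In a (possibly noncommutative) principal ideal domain — a domain in which every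
left ideal and every right ideal is principal — any two two-sided ideals commute. -/
theorem pid_is_ci {R : Type*} [Ring R] [IsDomain R]
    (hleft : ∀ I : Ideal R, I.IsPrincipal)
    (hright : ∀ I : Ideal Rᵐᵒᵖ, I.IsPrincipal) :
    ∀ A B : TwoSidedIdeal R, tmul A B = tmul B A := by
  have : IsPrincipalIdealRing R := ⟨hleft⟩
  have hgen : ∀ I : TwoSidedIdeal R, ∃ p, I.IsNormalGenerator p :=
    TwoSidedIdeal.exists_isNormalGenerator hleft hright
  have hcoatom : ∀ P Q : TwoSidedIdeal R, IsCoatom P → IsCoatom Q → tmul P Q = tmul Q P := by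
    intro P Q hP hQ
    obtain ⟨p, hp⟩ := hgen P
    obtain ⟨q, hq⟩ := hgen Q
    exact TwoSidedIdeal.tmul_comm_of_isCoatom hp hq hP hQ
  intro A B
  refine TwoSidedIdeal.tmul_comm_of_forall_isCoatom hgen (fun Q hQ => ?_) B
  exact (TwoSidedIdeal.tmul_comm_of_forall_isCoatom hgen (fun P hP => hcoatom Q P hQ hP) A).symm
end
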